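/- Let V : ℝ³ → ℝ be continuous with V(λx) = λ^s V(x) for all λ > 0 and some s > 2, and V(x) > 0 for |x| = 1. Then lim_{γ → 0⁺} E^TF_{γ,1} = inf { V(x) − (1/4) r(x)² : x ∈ ℝ³ }. -/

import Mathlib

/-!
The effective potential `W = V - r²/4` tends to `+∞` at infinity, since `V(x) ≥ c ‖x‖^s` with
`s > 2` beats `r(x)² ≤ ‖x‖²`; so `W` attains its infimum `m` at some `x₀`. Pointwise
`V ρ - r² ρ / 4 ≥ m ρ`, and the interaction term is nonnegative, so `E^TF_{γ,1} ≥ m`. Conversely,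
the uniform density on a compact neighbourhood `K` of `x₀` on which `W < m + ε` has energy at most
`m + ε + γ / |K|`, which tends to `m + ε` as `γ → 0⁺`.
-/

open MeasureTheory Filter Topology

noncomputable section

/-- Three-dimensional Euclidean space. -/
abbrev E3 := EuclideanSpace ℝ (Fin 3)

/-- The distance `r(x) = √(x₁² + x₂²)` from `x` to the `x₃`-axis. -/
def rax (x : E3) : ℝ := Real.sqrt (x 0 ^ 2 + x 1 ^ 2)

/-- The integrand of the 3D Thomas–Fermi functional:
`V ρ − (Ω²/4) r² ρ + g ρ²`. -/
def tfIntegrand (V : E3 → ℝ) (g Ω : ℝ) (ρ : E3 → ℝ) (x : E3) : ℝ :=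
  V x * ρ x - Ω ^ 2 / 4 * rax x ^ 2 * ρ x + g * ρ x ^ 2

/-- Admissible densities for the 3D Thomas–Fermi problem: measurable, nonnegative,
in `L¹ ∩ L²`, with finite potential terms and unit mass. -/
def tfAdmissible (V : E3 → ℝ) (ρ : E3 → ℝ) : Prop :=
  Measurable ρ ∧ (∀ x, 0 ≤ ρ x) ∧ Integrable ρ ∧ Integrable (fun x => ρ x ^ 2) ∧
    Integrable (fun x => V x * ρ x) ∧ Integrable (fun x => rax x ^ 2 * ρ x) ∧
    (∫ x, ρ x) = 1

/-- The 3D Thomas–Fermi energy `E^TF_{g,Ω}`. -/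
def ETF (V : E3 → ℝ) (g Ω : ℝ) : ℝ :=
  sInf { e | ∃ ρ : E3 → ℝ, tfAdmissible V ρ ∧ e = ∫ x, tfIntegrand V g Ω ρ x }

/-- The candidate Thomas–Fermi minimizer with chemical potential `μ`:
`ρ^TF_{g,Ω}(x) = (1/(2g)) [μ + (Ω²/4) r(x)² − V(x)]₊`. -/
def rhoTF (V : E3 → ℝ) (g Ω μ : ℝ) (x : E3) : ℝ :=
  1 / (2 * g) * max (μ + Ω ^ 2 / 4 * rax x ^ 2 - V x) 0

/-- Homogeneity of degree `s`: `V(λx) = λ^s V(x)` for all `λ > 0`. -/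
def Homogeneous (V : E3 → ℝ) (s : ℝ) : Prop :=
  ∀ lam : ℝ, 0 < lam → ∀ x : E3, V (lam • x) = lam ^ s * V x

/-- The effective potential `W(x) = V(x) − (1/4) r(x)²`. -/
def Wpot (V : E3 → ℝ) (x : E3) : ℝ := V x - 1 / 4 * rax x ^ 2

lemma rax_sq_le_norm_sq (x : E3) : rax x ^ 2 ≤ ‖x‖ ^ 2 := by
  rw [rax, Real.sq_sqrt (by positivity), EuclideanSpace.norm_sq_eq, Fin.sum_univ_three]
  simp only [Real.norm_eq_abs, sq_abs]
  linarith [sq_nonneg (x 2)]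

lemma continuous_rax : Continuous rax := by
  unfold rax; fun_prop

lemma continuous_Wpot {V : E3 → ℝ} (hVc : Continuous V) : Continuous (Wpot V) :=
  hVc.sub (continuous_const.mul (continuous_rax.pow 2))

section Coercivity

variable {V : E3 → ℝ} {s : ℝ}

lemma exists_pos_le_of_norm_eq_one (hVc : Continuous V) (hVpos : ∀ x : E3, ‖x‖ = 1 → 0 < V x) :
    ∃ c > 0, ∀ x : E3, ‖x‖ = 1 → c ≤ V x := by
  obtain ⟨z, hz, hzmin⟩ := (isCompact_sphere (0 : E3) 1).exists_isMinOn
    (NormedSpace.sphere_nonempty.2 zero_le_one) hVc.continuousOn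
  refine ⟨V z, hVpos z (by simpa using hz), fun x hx => hzmin (by simpa using hx)⟩

lemma Homogeneous.mul_rpow_norm_le (hhom : Homogeneous V s) {c : ℝ}
    (hc : ∀ x : E3, ‖x‖ = 1 → c ≤ V x) {x : E3} (hx : x ≠ 0) : c * ‖x‖ ^ s ≤ V x := by
  have hn : 0 < ‖x‖ := norm_pos_iff.2 hx
  have hu : ‖‖x‖⁻¹ • x‖ = 1 := by
    rw [norm_smul, norm_inv, norm_norm, inv_mul_cancel₀ hn.ne']
  have hVx : V x = ‖x‖ ^ s * V (‖x‖⁻¹ • x) := by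
    rw [← hhom ‖x‖ hn, smul_smul, mul_inv_cancel₀ hn.ne', one_smul]
  rw [hVx, mul_comm c]
  exact mul_le_mul_of_nonneg_left (hc _ hu) (Real.rpow_nonneg hn.le s)

lemma tendsto_Wpot_cocompact_atTop (hVc : Continuous V) (hs : 2 < s) (hhom : Homogeneous V s)
    (hVpos : ∀ x : E3, ‖x‖ = 1 → 0 < V x) : Tendsto (Wpot V) (cocompact E3) atTop := by
  obtain ⟨c, hc, hcV⟩ := exists_pos_le_of_norm_eq_one hVc hVpos
  have hgrowth : Tendsto (fun t : ℝ => t ^ 2 * (c * t ^ (s - 2) - 1 / 4)) atTop atTop :=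
    (tendsto_pow_atTop two_ne_zero).atTop_mul_atTop₀ <| tendsto_atTop_add_const_right _ _ <|
      (tendsto_rpow_atTop (by linarith)).const_mul_atTop hc
  refine tendsto_atTop_mono' _ ?_ (hgrowth.comp tendsto_norm_cocompact_atTop)
  filter_upwards [tendsto_norm_cocompact_atTop.eventually_ge_atTop 1] with x hx
  have hn : 0 < ‖x‖ := one_pos.trans_le hx
  have hsplit : ‖x‖ ^ s = ‖x‖ ^ (s - 2) * ‖x‖ ^ 2 := by
    rw [← Real.rpow_natCast, ← Real.rpow_add hn]
    norm_num
  have hV := hhom.mul_rpow_norm_le hcV (norm_pos_iff.1 hn)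
  have hr := rax_sq_le_norm_sq x
  simp only [Function.comp_apply, Wpot]
  nlinarith

end Coercivity

section Energy

variable {V : E3 → ℝ} {m γ : ℝ}

lemma le_integral_tfIntegrand (hm : ∀ x, m ≤ Wpot V x) (hγ : 0 ≤ γ) {ρ : E3 → ℝ}
    (hρ : tfAdmissible V ρ) : m ≤ ∫ x, tfIntegrand V γ 1 ρ x := by
  obtain ⟨-, hpos, hint, hint2, hVρ, hrρ, hmass⟩ := hρ
  have hpot : Integrable (fun x => Wpot V x * ρ x) := by
    refine (hVρ.sub (hrρ.const_mul (1 / 4))).congr (.of_forall fun x => ?_)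
    simp only [Pi.sub_apply, Wpot]
    ring
  have hsplit : (fun x => tfIntegrand V γ 1 ρ x) = fun x => Wpot V x * ρ x + γ * ρ x ^ 2 := by
    funext x; simp only [tfIntegrand, Wpot]; ring
  have hinteraction : 0 ≤ ∫ x, γ * ρ x ^ 2 := integral_nonneg fun x => by positivity
  have hpotential : m ≤ ∫ x, Wpot V x * ρ x :=
    calc m = ∫ x, m * ρ x := by rw [integral_const_mul, hmass, mul_one]
      _ ≤ ∫ x, Wpot V x * ρ x :=
        integral_mono (hint.const_mul m) hpot fun x => mul_le_mul_of_nonneg_right (hm x) (hpos x)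
  rw [hsplit, integral_add hpot (hint2.const_mul γ)]
  linarith

def uniformDensity (A : Set E3) : E3 → ℝ := A.indicator fun _ => (volume.real A)⁻¹

variable {A : Set E3}

lemma tfAdmissible_uniformDensity (hVc : Continuous V) (hA : IsCompact A) (hA0 : volume A ≠ 0) :
    tfAdmissible V (uniformDensity A) := by
  have hAm := hA.measurableSet
  have hv : 0 < volume.real A := ENNReal.toReal_pos hA0 hA.measure_lt_top.ne
  have hconst : ∀ a : ℝ, Integrable (A.indicator fun _ => a) := fun a =>
    (integrable_indicator_iff hAm).2 (integrableOn_const hA.measure_lt_top.ne)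
  have hmul : ∀ f : E3 → ℝ, Continuous f → Integrable fun x => f x * uniformDensity A x := by
    intro f hf
    have : (fun x => f x * uniformDensity A x) = A.indicator fun x => f x * (volume.real A)⁻¹ := by
      funext x; by_cases hx : x ∈ A <;> simp [uniformDensity, hx]
    rw [this]
    exact (integrable_indicator_iff hAm).2 ((hf.continuousOn.integrableOn_compact hA).mul_const _)
  have hsq : (fun x => uniformDensity A x ^ 2) = A.indicator fun _ => (volume.real A)⁻¹ ^ 2 := by
    funext x; by_cases hx : x ∈ A <;> simp [uniformDensity, hx]
  refine ⟨measurable_const.indicator hAm, fun x => Set.indicator_nonneg (fun _ _ => by positivity) x,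
    hconst _, hsq ▸ hconst _, hmul V hVc, hmul _ (continuous_rax.pow 2), ?_⟩
  rw [uniformDensity, integral_indicator hAm, setIntegral_const, smul_eq_mul,
    mul_inv_cancel₀ hv.ne']

lemma integral_tfIntegrand_uniformDensity_le (hVc : Continuous V) (hA : IsCompact A)
    (hA0 : volume A ≠ 0) {b : ℝ} (hb : ∀ x ∈ A, Wpot V x ≤ b) :
    ∫ x, tfIntegrand V γ 1 (uniformDensity A) x ≤ b + γ / volume.real A := by
  have hAm := hA.measurableSet
  set v := volume.real A
  have hv : 0 < v := ENNReal.toReal_pos hA0 hA.measure_lt_top.ne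
  have hind : (fun x => tfIntegrand V γ 1 (uniformDensity A) x)
      = A.indicator fun x => (Wpot V x + γ / v) * v⁻¹ := by
    funext x
    by_cases hx : x ∈ A
    · simp only [tfIntegrand, uniformDensity, Wpot, Set.indicator_of_mem hx]
      ring
    · simp [tfIntegrand, uniformDensity, hx]
  rw [hind, integral_indicator hAm]
  calc ∫ x in A, (Wpot V x + γ / v) * v⁻¹
      ≤ ∫ x in A, (b + γ / v) * v⁻¹ := by
        refine setIntegral_mono_on ?_ (integrableOn_const hA.measure_lt_top.ne) hAm fun x hx => ?_
        · exact (((continuous_Wpot hVc).add continuous_const).mul continuous_const).continuousOn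
            |>.integrableOn_compact hA
        · gcongr; exact hb x hx
    _ = b + γ / v := by
        rw [setIntegral_const, smul_eq_mul, mul_comm _ v⁻¹]
        exact mul_inv_cancel_left₀ hv.ne' _

lemma le_ETF (hVc : Continuous V) (hm : ∀ x, m ≤ Wpot V x) (hγ : 0 ≤ γ) : m ≤ ETF V γ 1 := by
  have hball : volume (Metric.closedBall (0 : E3) 1) ≠ 0 :=
    (Metric.measure_closedBall_pos volume 0 one_pos).ne'
  exact le_csInf ⟨_, _, tfAdmissible_uniformDensity hVc (isCompact_closedBall 0 1) hball, rfl⟩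
    fun _ ⟨_, hρ, he⟩ => he ▸ le_integral_tfIntegrand hm hγ hρ

lemma ETF_le_add_div (hVc : Continuous V) (hm : ∀ x, m ≤ Wpot V x) (hγ : 0 ≤ γ) (hA : IsCompact A)
    (hA0 : volume A ≠ 0) {b : ℝ} (hb : ∀ x ∈ A, Wpot V x ≤ b) :
    ETF V γ 1 ≤ b + γ / volume.real A := by
  exact csInf_le_of_le ⟨m, fun _ ⟨_, hρ, he⟩ => he ▸ le_integral_tfIntegrand hm hγ hρ⟩
    ⟨uniformDensity A, tfAdmissible_uniformDensity hVc hA hA0, rfl⟩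
    (integral_tfIntegrand_uniformDensity_le hVc hA hA0 hb)

lemma eventually_ETF_lt (hVc : Continuous V) (hm : ∀ x, m ≤ Wpot V x) {x₀ : E3} {b : ℝ}
    (hb : Wpot V x₀ < b) : ∀ᶠ γ in 𝓝[>] 0, ETF V γ 1 < b := by
  obtain ⟨c, hx₀c, hcb⟩ := exists_between hb
  obtain ⟨K, hKx₀, hKc, hK⟩ := local_compact_nhds <|
    (continuous_Wpot hVc).continuousAt.eventually (gt_mem_nhds hx₀c)
  have hK0 : volume K ≠ 0 := (Measure.measure_pos_of_mem_nhds volume hKx₀).ne'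
  have hlim : Tendsto (fun γ => c + γ / volume.real K) (𝓝[>] 0) (𝓝 c) := by
    refine ((continuous_const.add (continuous_id.div_const _)).tendsto' 0 c ?_).mono_left
      nhdsWithin_le_nhds
    simp
  filter_upwards [hlim.eventually (gt_mem_nhds hcb), self_mem_nhdsWithin] with γ hγb hγ
  exact (ETF_le_add_div hVc hm (le_of_lt hγ) hK hK0 fun x hx => (hKc hx).le).trans_lt hγb

end Energy

/-- **Ultrarapid-rotation limit of the Thomas–Fermi energy**:
`lim_{γ → 0⁺} E^TF_{γ,1} = inf { V(x) − (1/4) r(x)² : x ∈ ℝ³ }`. -/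
theorem tf3_energy_strong_rotation_limit (V : E3 → ℝ) (hVc : Continuous V)
    (s : ℝ) (hs : 2 < s) (hhom : Homogeneous V s)
    (hVpos : ∀ x : E3, ‖x‖ = 1 → 0 < V x) :
    Tendsto (fun γ : ℝ => ETF V γ 1) (𝓝[>] 0) (𝓝 (⨅ x : E3, Wpot V x)) := by
  obtain ⟨x₀, hx₀⟩ :=
    (continuous_Wpot hVc).exists_forall_le (tendsto_Wpot_cocompact_atTop hVc hs hhom hVpos)
  have hinf : ⨅ x, Wpot V x = Wpot V x₀ :=
    le_antisymm (ciInf_le ⟨_, Set.forall_mem_range.2 hx₀⟩ x₀) (le_ciInf hx₀)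
  rw [hinf]
  refine tendsto_order.2 ⟨fun a ha => ?_, fun b hb => eventually_ETF_lt hVc hx₀ hb⟩
  filter_upwards [self_mem_nhdsWithin] with γ hγ
  exact ha.trans_le (le_ETF hVc hx₀ (le_of_lt hγ))
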